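/- Fix a positive integer k. For 1 ≤ t ≤ k define the polynomial P_t = ∑_{1≤i₁<i₂<⋯<i_t≤k} (x_{i₁}+x_{i₂}+⋯+x_{i_t})^k in ℚ[x₁, x₂, …, x_k]. Then ∑_{i=0}^{k−1} (−1)^i P_{k−i} = k! · x₁x₂⋯x_k. -/

import Mathlib

/-!
Expanding `(∑ j ∈ s, x j) ^ n` gives one monomial `∏ i, x (p i)` for every map `p : Fin n → s`.
In the alternating sum over the subsets `s`, inclusion–exclusion cancels every map that misses a
variable, so only surjections survive; for `n = k` these are the `k!` permutations, each of which
contributes `x₁ ⋯ x_k`.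
-/

open Finset Function MvPolynomial

variable {ι R : Type*} [Fintype ι] [DecidableEq ι] [CommRing R]

theorem sum_surjective_prod_eq_sum_neg_one_pow_card {κ : Type*} [Fintype κ] [DecidableEq κ]
    (x : ι → R) :
    ∑ p : κ → ι with Surjective p, ∏ i, x (p i) =
      ∑ t : Finset ι, (-1) ^ #t * (∑ j ∈ tᶜ, x j) ^ Fintype.card κ := by
  have hincl := inclusion_exclusion_sum_inf_compl univ
    (fun j => univ.filter fun p : κ → ι => j ∉ Set.range p) (fun p => ∏ i, x (p i))
  convert hincl using 1
  · congr 1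
    ext p
    simp only [mem_filter, mem_univ, true_and, Set.mem_range, not_exists, compl_filter,
      not_forall, Decidable.not_not, mem_inf, forall_const]
    rfl
  · refine sum_congr rfl fun t _ => ?_
    have hmiss : t.inf (fun j => univ.filter fun p : κ → ι => j ∉ Set.range p) =
        Fintype.piFinset fun _ => tᶜ := by
      ext p
      simp only [Set.mem_range, not_exists, mem_inf, mem_filter, mem_univ, true_and,
        Fintype.mem_piFinset, mem_compl]
      grind
    rw [hmiss, sum_prod_piFinset, prod_const, card_univ, zsmul_eq_mul]
    push_cast
    rfl

theorem sum_surjective_prod_eq_factorial_mul_prod (x : ι → R) :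
    ∑ p : ι → ι with Surjective p, ∏ i, x (p i) = (Fintype.card ι).factorial * ∏ i, x i := by
  rw [sum_subtype _ fun p => mem_filter_univ p, ← Fintype.card_perm, ← nsmul_eq_mul, ← card_univ,
    ← sum_const]
  exact Fintype.sum_equiv
    ((Equiv.subtypeEquivRight fun _ => Finite.surjective_iff_bijective).trans Equiv.bijectiveEquiv)
    _ _ fun p => Equiv.prod_comp (.ofBijective (p : ι → ι) (Finite.surjective_iff_bijective.mp p.2)) x

theorem sum_range_neg_one_pow_mul_sum_powersetCard (f : Finset ι → R) (hf : f ∅ = 0) :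
    ∑ i ∈ range (Fintype.card ι), (-1) ^ i *
        ∑ s ∈ powersetCard (Fintype.card ι - i) univ, f s =
      ∑ t : Finset ι, (-1) ^ #t * f tᶜ := by
  rw [← powerset_univ, sum_powerset, ← card_univ, sum_range_succ, powersetCard_self, sum_singleton,
    compl_univ, hf, mul_zero, add_zero]
  refine sum_congr rfl fun i hi => ?_
  have hin : i ≤ #(univ : Finset ι) := (mem_range.mp hi).le
  rw [mul_sum]
  refine sum_nbij' compl compl (fun s hs => ?_) (fun t ht => ?_) (fun s _ => compl_compl s)
    (fun t _ => compl_compl t) (fun s hs => ?_)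
  all_goals simp only [mem_powersetCard_univ, card_compl, ← card_univ] at *
  · omega
  · omega
  · rw [compl_compl, hs, Nat.sub_sub_self hin]

/-- **Lemma A.3**: the symmetric polynomial identity
`∑_{i=0}^{k−1} (−1)ⁱ P_{k−i} = k! · x₁⋯x_k`, where
`P_t = ∑_{1 ≤ i₁ < ⋯ < i_t ≤ k} (x_{i₁} + ⋯ + x_{i_t})^k`. -/
theorem alternating_power_sum_identity (k : ℕ) (hk : 0 < k) :
    (∑ i ∈ Finset.range k, (-1 : MvPolynomial (Fin k) ℚ) ^ i *
        ∑ s ∈ Finset.powersetCard (k - i) (Finset.univ : Finset (Fin k)),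
          (∑ j ∈ s, (X j : MvPolynomial (Fin k) ℚ)) ^ k) =
      (k.factorial : MvPolynomial (Fin k) ℚ) * ∏ j, (X j : MvPolynomial (Fin k) ℚ) := by
  calc _ = ∑ t : Finset (Fin k), (-1) ^ #t * (∑ j ∈ tᶜ, (X j : MvPolynomial (Fin k) ℚ)) ^ k := by
        simpa only [Fintype.card_fin] using sum_range_neg_one_pow_mul_sum_powersetCard
          (fun s => (∑ j ∈ s, (X j : MvPolynomial (Fin k) ℚ)) ^ k) (by simp [hk.ne'])
    _ = ∑ p : Fin k → Fin k with Surjective p, ∏ i, (X (p i) : MvPolynomial (Fin k) ℚ) := by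
        rw [sum_surjective_prod_eq_sum_neg_one_pow_card, Fintype.card_fin]
    _ = _ := by rw [sum_surjective_prod_eq_factorial_mul_prod, Fintype.card_fin]
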